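/- arXiv:math/0405556 — 3 statements merged into one kernel-verified Lean document; each statement's English description precedes it below -/
import Mathlib

section
/- Let (H, R) be a quasitriangular Hopf algebra and F a twist for H. Set R̃ = F₂₁⁻¹ R F, where F₂₁ is F with its two legs swapped. Then in H⊗⁴ the identity F_{(13)(24)} · F₁₃ · F₂₄ · R̃₂₃ = R₂₃ · F_{(12)(34)} · F₁₂ · F₃₄ holds, where F_{(13)(24)} = σ₂₃((Δ⊗Δ)(F)) with σ₂₃ the flip of the second and third tensor legs, F_{(12)(34)} = (Δ⊗Δ)(F), and a subscript pair ij means the element placed in legs i and j of H⊗⁴. -/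
open TensorProduct

set_option maxHeartbeats 1000000
set_option synthInstance.maxHeartbeats 200000

noncomputable section

namespace Stmt1

variable (k H : Type*) [CommRing k] [Ring H] [HopfAlgebra k H]

/-- The coproduct of `H` as an algebra map. -/
def Δ : H →ₐ[k] H ⊗[k] H := Bialgebra.comulAlgHom k H

/-- The counit of `H` as an algebra map. -/
def ε : H →ₐ[k] k := Bialgebra.counitAlgHom k H

/-- Embedding of `H ⊗ H` into legs 1,2 of `H ⊗ (H ⊗ H)`. -/
def ι12 : H ⊗[k] H →ₐ[k] H ⊗[k] (H ⊗[k] H) :=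
  Algebra.TensorProduct.map (AlgHom.id k H) Algebra.TensorProduct.includeLeft

/-- Embedding of `H ⊗ H` into legs 1,3 of `H ⊗ (H ⊗ H)`. -/
def ι13 : H ⊗[k] H →ₐ[k] H ⊗[k] (H ⊗[k] H) :=
  Algebra.TensorProduct.map (AlgHom.id k H) Algebra.TensorProduct.includeRight

/-- Embedding of `H ⊗ H` into legs 2,3 of `H ⊗ (H ⊗ H)`. -/
def ι23 : H ⊗[k] H →ₐ[k] H ⊗[k] (H ⊗[k] H) :=
  Algebra.TensorProduct.includeRight

/-- `Δ ⊗ id`, landing in `H ⊗ (H ⊗ H)`. -/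
def comulId : H ⊗[k] H →ₐ[k] H ⊗[k] (H ⊗[k] H) :=
  (Algebra.TensorProduct.assoc k k k H H H).toAlgHom.comp
    (Algebra.TensorProduct.map (Δ k H) (AlgHom.id k H))

/-- `id ⊗ Δ`, landing in `H ⊗ (H ⊗ H)`. -/
def idComul : H ⊗[k] H →ₐ[k] H ⊗[k] (H ⊗[k] H) :=
  Algebra.TensorProduct.map (AlgHom.id k H) (Δ k H)

/-- Embedding of `H ⊗ H` into legs 1,2 of `(H ⊗ H) ⊗ (H ⊗ H)`. -/
def j12 : H ⊗[k] H →ₐ[k] (H ⊗[k] H) ⊗[k] (H ⊗[k] H) :=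
  Algebra.TensorProduct.includeLeft

/-- Embedding of `H ⊗ H` into legs 3,4 of `(H ⊗ H) ⊗ (H ⊗ H)`. -/
def j34 : H ⊗[k] H →ₐ[k] (H ⊗[k] H) ⊗[k] (H ⊗[k] H) :=
  Algebra.TensorProduct.includeRight

/-- Embedding of `H ⊗ H` into legs 1,3 of `(H ⊗ H) ⊗ (H ⊗ H)`. -/
def j13 : H ⊗[k] H →ₐ[k] (H ⊗[k] H) ⊗[k] (H ⊗[k] H) :=
  Algebra.TensorProduct.map Algebra.TensorProduct.includeLeft
    Algebra.TensorProduct.includeLeft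

/-- Embedding of `H ⊗ H` into legs 2,4 of `(H ⊗ H) ⊗ (H ⊗ H)`. -/
def j24 : H ⊗[k] H →ₐ[k] (H ⊗[k] H) ⊗[k] (H ⊗[k] H) :=
  Algebra.TensorProduct.map Algebra.TensorProduct.includeRight
    Algebra.TensorProduct.includeRight

/-- Embedding of `H ⊗ H` into legs 2,3 of `(H ⊗ H) ⊗ (H ⊗ H)`. -/
def j23 : H ⊗[k] H →ₐ[k] (H ⊗[k] H) ⊗[k] (H ⊗[k] H) :=
  Algebra.TensorProduct.map Algebra.TensorProduct.includeRight
    Algebra.TensorProduct.includeLeft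

/-- `F_{(12)(34)} = (Δ ⊗ Δ)(F)`. -/
def ΔΔ : H ⊗[k] H →ₐ[k] (H ⊗[k] H) ⊗[k] (H ⊗[k] H) :=
  Algebra.TensorProduct.map (Δ k H) (Δ k H)

/-- `F_{(13)(24)} = σ₂₃((Δ ⊗ Δ)(F))`, where `σ₂₃` flips the middle two tensor legs. -/
def Δ1324 (F : H ⊗[k] H) : (H ⊗[k] H) ⊗[k] (H ⊗[k] H) :=
  (TensorProduct.tensorTensorTensorComm k H H H H) (ΔΔ k H F)

-- ==== auxiliary definitions and lemmas ====

/-- `σ₂₃` (flip of middle legs) as an algebra equivalence. -/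
def σA : (H ⊗[k] H) ⊗[k] (H ⊗[k] H) ≃ₐ[k] (H ⊗[k] H) ⊗[k] (H ⊗[k] H) :=
  Algebra.TensorProduct.tensorTensorTensorComm k k k k H H H H

/-- Embedding of `H ⊗ (H ⊗ H)` into legs 2,3,4 of `(H ⊗ H) ⊗ (H ⊗ H)`. -/
def e234 : H ⊗[k] (H ⊗[k] H) →ₐ[k] (H ⊗[k] H) ⊗[k] (H ⊗[k] H) :=
  Algebra.TensorProduct.map Algebra.TensorProduct.includeRight (AlgHom.id k (H ⊗[k] H))

/-- `id ⊗ id ⊗ Δ` landing in `(H⊗H)⊗(H⊗H)`. -/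
def ρ4 : H ⊗[k] (H ⊗[k] H) →ₐ[k] (H ⊗[k] H) ⊗[k] (H ⊗[k] H) :=
  (Algebra.TensorProduct.assoc k k k H H (H ⊗[k] H)).symm.toAlgHom.comp
    (Algebra.TensorProduct.map (AlgHom.id k H)
      (Algebra.TensorProduct.map (AlgHom.id k H) (Δ k H)))

/-- The rearrangement `H ⊗ ((H⊗H) ⊗ H) ≃ (H⊗H) ⊗ (H⊗H)`. -/
def χ : H ⊗[k] ((H ⊗[k] H) ⊗[k] H) ≃ₐ[k] (H ⊗[k] H) ⊗[k] (H ⊗[k] H) :=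
  ((Algebra.TensorProduct.assoc k k k H (H ⊗[k] H) H).symm.trans
    (Algebra.TensorProduct.congr (Algebra.TensorProduct.assoc k k k H H H).symm AlgEquiv.refl)).trans
    (Algebra.TensorProduct.assoc k k k (H ⊗[k] H) H H)

/-- `id ⊗ Δ ⊗ id` landing in `(H⊗H)⊗(H⊗H)`. -/
def ψ4 : H ⊗[k] (H ⊗[k] H) →ₐ[k] (H ⊗[k] H) ⊗[k] (H ⊗[k] H) :=
  (χ k H).toAlgHom.comp
    (Algebra.TensorProduct.map (AlgHom.id k H)
      (Algebra.TensorProduct.map (Δ k H) (AlgHom.id k H)))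

lemma delta1324_eq (F : H ⊗[k] H) : Δ1324 k H F = σA k H (ΔΔ k H F) := rfl

lemma sigma_j12 (x : H ⊗[k] H) : σA k H (j12 k H x) = j13 k H x := by
  induction x using TensorProduct.induction_on with
  | zero => simp
  | tmul f g => rfl
  | add x y hx hy => simp only [map_add, hx, hy]

lemma sigma_j34 (x : H ⊗[k] H) : σA k H (j34 k H x) = j24 k H x := by
  induction x using TensorProduct.induction_on with
  | zero => simp
  | tmul f g => rfl
  | add x y hx hy => simp only [map_add, hx, hy]

lemma sigma_j23 (x : H ⊗[k] H) :
    σA k H (j23 k H x) = j23 k H ((Algebra.TensorProduct.comm k H H) x) := by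
  induction x using TensorProduct.induction_on with
  | zero => simp
  | tmul f g => rfl
  | add x y hx hy => simp only [map_add, hx, hy]

lemma chi_tmul (a c : H) (y : H ⊗[k] H) :
    χ k H (a ⊗ₜ (y ⊗ₜ c)) = ((a ⊗ₜ (1 : H)) ⊗ₜ ((1 : H) ⊗ₜ c)) * j23 k H y := by
  induction y using TensorProduct.induction_on with
  | zero => simp [zero_tmul, tmul_zero]
  | tmul u v =>
    simp [χ, j23, Algebra.TensorProduct.tmul_mul_tmul]
  | add y z hy hz =>
    simp only [add_tmul, tmul_add, map_add, hy, hz, mul_add]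

lemma psi_tmul (a b c : H) :
    ψ4 k H (a ⊗ₜ (b ⊗ₜ c))
      = ((a ⊗ₜ (1 : H)) ⊗ₜ ((1 : H) ⊗ₜ c)) * j23 k H (Δ k H b) := by
  have : ψ4 k H (a ⊗ₜ (b ⊗ₜ c)) = χ k H (a ⊗ₜ ((Δ k H b) ⊗ₜ c)) := by
    simp [ψ4]
  rw [this, chi_tmul]

lemma d_comm (a c : H) (y : H ⊗[k] H) :
    j23 k H y * ((a ⊗ₜ (1 : H)) ⊗ₜ ((1 : H) ⊗ₜ c))
      = ((a ⊗ₜ (1 : H)) ⊗ₜ ((1 : H) ⊗ₜ c)) * j23 k H y := by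
  induction y using TensorProduct.induction_on with
  | zero => simp
  | tmul u v => simp [j23, Algebra.TensorProduct.tmul_mul_tmul]
  | add y z hy hz => simp only [map_add, add_mul, mul_add, hy, hz]

lemma sigma_d (a c : H) :
    σA k H ((a ⊗ₜ (1 : H)) ⊗ₜ ((1 : H) ⊗ₜ c)) = (a ⊗ₜ (1 : H)) ⊗ₜ ((1 : H) ⊗ₜ c) := rfl

/-- The key commutation: `R₂₃` intertwines `id ⊗ Δ ⊗ id` and its σ₂₃-flip. -/
lemma R_comm (R : H ⊗[k] H)
    (hcom : ∀ x : H, R * Δ k H x = (Algebra.TensorProduct.comm k H H) (Δ k H x) * R)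
    (X : H ⊗[k] (H ⊗[k] H)) :
    σA k H (ψ4 k H X) * j23 k H R = j23 k H R * ψ4 k H X := by
  induction X using TensorProduct.induction_on with
  | zero => simp
  | tmul a w =>
    induction w using TensorProduct.induction_on with
    | zero => simp [tmul_zero]
    | tmul b c =>
      rw [psi_tmul, map_mul, sigma_d, sigma_j23, mul_assoc, ← map_mul, ← hcom b,
        map_mul, ← mul_assoc, ← d_comm, mul_assoc]
    | add w₁ w₂ h₁ h₂ =>
      simp only [tmul_add, map_add, add_mul, mul_add, h₁, h₂]
  | add X Y hX hY => simp only [map_add, add_mul, mul_add, hX, hY]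

-- composition identities

lemma e234_i12 (x : H ⊗[k] H) : e234 k H (ι12 k H x) = j23 k H x := by
  induction x using TensorProduct.induction_on with
  | zero => simp
  | tmul f g => simp [e234, ι12, j23]
  | add x y hx hy => simp only [map_add, hx, hy]

lemma e234_i23 (x : H ⊗[k] H) : e234 k H (ι23 k H x) = j34 k H x := by
  induction x using TensorProduct.induction_on with
  | zero => simp
  | tmul f g => simp [e234, ι23, j34, ← Algebra.TensorProduct.one_def]
  | add x y hx hy => simp only [map_add, hx, hy]

lemma e234_idComul (x : H ⊗[k] H) : e234 k H (idComul k H x) = ρ4 k H (ι23 k H x) := by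
  induction x using TensorProduct.induction_on with
  | zero => simp
  | tmul f g => simp [e234, idComul, ρ4, ι23]
  | add x y hx hy => simp only [map_add, hx, hy]

lemma rho_aux (g : H) (y : H ⊗[k] H) :
    ρ4 k H ((Algebra.TensorProduct.assoc k k k H H H) (y ⊗ₜ g)) = y ⊗ₜ (Δ k H g) := by
  induction y using TensorProduct.induction_on with
  | zero => simp [zero_tmul]
  | tmul u v => simp [ρ4]
  | add y z hy hz => simp only [add_tmul, map_add, hy, hz]

lemma rho_comulId (x : H ⊗[k] H) : ρ4 k H (comulId k H x) = ΔΔ k H x := by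
  induction x using TensorProduct.induction_on with
  | zero => simp
  | tmul f g =>
    have : comulId k H (f ⊗ₜ g)
        = (Algebra.TensorProduct.assoc k k k H H H) ((Δ k H f) ⊗ₜ g) := by
      simp [comulId]
    rw [this, rho_aux]
    simp [ΔΔ]
  | add x y hx hy => simp only [map_add, hx, hy]

lemma rho_i12 (x : H ⊗[k] H) : ρ4 k H (ι12 k H x) = j12 k H x := by
  induction x using TensorProduct.induction_on with
  | zero => simp
  | tmul f g => simp [ρ4, ι12, j12, Algebra.TensorProduct.one_def]
  | add x y hx hy => simp only [map_add, hx, hy]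

lemma psi_aux (g : H) (y : H ⊗[k] H) :
    ((((1 : H) ⊗ₜ (1 : H)) ⊗ₜ ((1 : H) ⊗ₜ g)) : (H ⊗[k] H) ⊗[k] (H ⊗[k] H)) * j23 k H y
      = e234 k H ((Algebra.TensorProduct.assoc k k k H H H) (y ⊗ₜ g)) := by
  induction y using TensorProduct.induction_on with
  | zero => simp [zero_tmul]
  | tmul u v => simp [e234, j23, Algebra.TensorProduct.tmul_mul_tmul]
  | add y z hy hz => simp only [add_tmul, map_add, mul_add, hy, hz]

lemma psi_i23 (x : H ⊗[k] H) : ψ4 k H (ι23 k H x) = e234 k H (comulId k H x) := by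
  induction x using TensorProduct.induction_on with
  | zero => simp
  | tmul f g =>
    have h1 : ι23 k H (f ⊗ₜ g) = (1 : H) ⊗ₜ[k] (f ⊗ₜ[k] g) := rfl
    have h2 : comulId k H (f ⊗ₜ g)
        = (Algebra.TensorProduct.assoc k k k H H H) ((Δ k H f) ⊗ₜ g) := by
      simp [comulId]
    rw [h1, psi_tmul, h2, ← psi_aux]
  | add x y hx hy => simp only [map_add, hx, hy]

lemma map_delta_id (z : H ⊗[k] H) :
    Algebra.TensorProduct.map (Δ k H) (AlgHom.id k H) z
      = LinearMap.rTensor H (Coalgebra.comul (R := k)) z := by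
  induction z using TensorProduct.induction_on with
  | zero => simp
  | tmul u v => simp [Δ]
  | add x y hx hy => simp only [map_add, hx, hy]

lemma map_id_delta (z : H ⊗[k] H) :
    Algebra.TensorProduct.map (AlgHom.id k H) (Δ k H) z
      = LinearMap.lTensor H (Coalgebra.comul (R := k)) z := by
  induction z using TensorProduct.induction_on with
  | zero => simp
  | tmul u v => simp [Δ]
  | add x y hx hy => simp only [map_add, hx, hy]

lemma coassoc3 (h : H) : comulId k H (Δ k H h) = idComul k H (Δ k H h) := by
  have h1 : comulId k H (Δ k H h)
      = (TensorProduct.assoc k H H H)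
          (LinearMap.rTensor H (Coalgebra.comul (R := k)) (Coalgebra.comul h)) := by
    simp only [comulId, AlgHom.coe_comp, Function.comp_apply, map_delta_id]
    have : Δ k H h = Coalgebra.comul h := rfl
    rw [this]
    rfl
  have h2 : idComul k H (Δ k H h)
      = LinearMap.lTensor H (Coalgebra.comul (R := k)) (Coalgebra.comul h) := by
    simp only [idComul, map_id_delta]
    congr 1
  rw [h1, h2, Coalgebra.coassoc_apply]

lemma psi_idComul (x : H ⊗[k] H) : ψ4 k H (idComul k H x) = ρ4 k H (idComul k H x) := by
  induction x using TensorProduct.induction_on with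
  | zero => simp
  | tmul f g =>
    have h1 : idComul k H (f ⊗ₜ g)
        = ((f ⊗ₜ[k] (1 : H ⊗[k] H)) : H ⊗[k] (H ⊗[k] H)) * ι23 k H (Δ k H g) := by
      simp [idComul, ι23, ← Algebra.TensorProduct.one_def]
    have h2 : ψ4 k H ((f ⊗ₜ[k] (1 : H ⊗[k] H)) : H ⊗[k] (H ⊗[k] H))
        = ρ4 k H (f ⊗ₜ[k] (1 : H ⊗[k] H)) := by
      have h0 : ((1 : H ⊗[k] H)) = (1:H) ⊗ₜ[k] (1:H) := rfl
      rw [h0, psi_tmul]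
      have h00 : (1 : H ⊗[k] (H ⊗[k] H)) = (1:H) ⊗ₜ[k] (1 : H ⊗[k] H) := rfl
      simp only [ρ4, AlgHom.coe_comp, Function.comp_apply, Algebra.TensorProduct.map_tmul,
        AlgHom.coe_id, id_eq, map_one, mul_one, AlgEquiv.toAlgHom_eq_coe, AlgHom.coe_coe]
      rw [AlgEquiv.coe_algHom, Algebra.TensorProduct.assoc_symm_tmul, ← Algebra.TensorProduct.one_def]
    rw [h1, map_mul, map_mul, h2, psi_i23, coassoc3, e234_idComul]
  | add x y hx hy => simp only [map_add, hx, hy]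

/-- For a quasitriangular Hopf algebra `(H, R)` and a twist `F`, with
`R̃ = F₂₁⁻¹ R F`, one has `F_{(13)(24)} F₁₃ F₂₄ R̃₂₃ = R₂₃ F_{(12)(34)} F₁₂ F₃₄` in `H⊗⁴`. -/

theorem gauge_equivalence_of_twisted_tensor_square
    (R Rinv F Finv : H ⊗[k] H)
    (hRinv : R * Rinv = 1) (hRinv' : Rinv * R = 1)
    (hcom : ∀ x : H, R * Δ k H x = (Algebra.TensorProduct.comm k H H) (Δ k H x) * R)
    (hR1 : comulId k H R = ι13 k H R * ι23 k H R)
    (hR2 : idComul k H R = ι13 k H R * ι12 k H R)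
    (hF : F * Finv = 1) (hF' : Finv * F = 1)
    (hcoc : comulId k H F * ι12 k H F = idComul k H F * ι23 k H F)
    (hεF1 : (Algebra.TensorProduct.lid k H)
      ((Algebra.TensorProduct.map (ε k H) (AlgHom.id k H)) F) = 1)
    (hεF2 : (Algebra.TensorProduct.rid k k H)
      ((Algebra.TensorProduct.map (AlgHom.id k H) (ε k H)) F) = 1) :
    Δ1324 k H F * j13 k H F * j24 k H F
        * j23 k H ((Algebra.TensorProduct.comm k H H) Finv * R * F)
      = j23 k H R * ΔΔ k H F * j12 k H F * j34 k H F := by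
  have key : ψ4 k H (idComul k H F * ι23 k H F) * j23 k H F
      = ΔΔ k H F * j12 k H F * j34 k H F := by
    rw [map_mul, psi_idComul, psi_i23, ← e234_i12 k H F, mul_assoc, ← map_mul,
      hcoc, map_mul, e234_idComul, e234_i23, ← mul_assoc, ← map_mul, ← hcoc,
      map_mul, rho_comulId, rho_i12]
  set G := ψ4 k H (idComul k H F * ι23 k H F) with hGdef
  have hRG : σA k H G * j23 k H R = j23 k H R * G := R_comm k H R hcom _
  have hG : ΔΔ k H F * j12 k H F * j34 k H F * j23 k H Finv = G := by
    rw [← key, mul_assoc, ← map_mul, hF, map_one, mul_one]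
  have expand : Δ1324 k H F * j13 k H F * j24 k H F
      * j23 k H ((Algebra.TensorProduct.comm k H H) Finv) = σA k H G := by
    rw [delta1324_eq, ← sigma_j12, ← sigma_j34, ← sigma_j23, ← map_mul, ← map_mul,
      ← map_mul, hG]
  rw [map_mul, map_mul]
  simp only [← mul_assoc]
  rw [expand, hRG, mul_assoc, key]
  simp only [mul_assoc]

end Stmt1
end
end

section
/- Let V be a finite-dimensional vector space and R ∈ End(V⊗V) an invertible solution of the quantum Yang–Baxter equation R₁₂R₁₃R₂₃ = R₂₃R₁₃R₁₂. Define Q = R₂₁·R₁₂ ∈ End(V⊗V), where R₂₁ = P R P with P the flip. Then in End(V⊗V⊗V): Q₂₃·R₂₁·Q₁₃·R₁₂ = R₂₁·Q₁₃·R₁₂·Q₂₃, where the subscripts indicate the pair of tensor factors acted on (with the convention R₂₁ = PRP placed in legs 1,2). -/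
open TensorProduct

noncomputable section

namespace Stmt13

variable (k V : Type*) [Field k] [AddCommGroup V] [Module k V] [FiniteDimensional k V]

/-- `X` acting on legs 1,2 of `(V ⊗ V) ⊗ V`. -/
def e12 (X : V ⊗[k] V →ₗ[k] V ⊗[k] V) :
    (V ⊗[k] V) ⊗[k] V →ₗ[k] (V ⊗[k] V) ⊗[k] V :=
  TensorProduct.map X LinearMap.id

/-- `X` acting on legs 2,3 of `(V ⊗ V) ⊗ V`. -/
def e23 (X : V ⊗[k] V →ₗ[k] V ⊗[k] V) :
    (V ⊗[k] V) ⊗[k] V →ₗ[k] (V ⊗[k] V) ⊗[k] V :=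
  (TensorProduct.assoc k V V V).symm.toLinearMap ∘ₗ
    TensorProduct.map LinearMap.id X ∘ₗ (TensorProduct.assoc k V V V).toLinearMap

/-- The flip of legs 2,3 of `(V ⊗ V) ⊗ V`. -/
def s23 : (V ⊗[k] V) ⊗[k] V →ₗ[k] (V ⊗[k] V) ⊗[k] V :=
  e23 k V (TensorProduct.comm k V V).toLinearMap

/-- `X` acting on legs 1,3 of `(V ⊗ V) ⊗ V`. -/
def e13 (X : V ⊗[k] V →ₗ[k] V ⊗[k] V) :
    (V ⊗[k] V) ⊗[k] V →ₗ[k] (V ⊗[k] V) ⊗[k] V :=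
  s23 k V ∘ₗ e12 k V X ∘ₗ s23 k V

/-- The flip `P` on `V ⊗ V`. -/
def P : V ⊗[k] V →ₗ[k] V ⊗[k] V := (TensorProduct.comm k V V).toLinearMap

/-- `R₂₁ = P ∘ R ∘ P`. -/
def R21 (R : V ⊗[k] V →ₗ[k] V ⊗[k] V) : V ⊗[k] V →ₗ[k] V ⊗[k] V :=
  P k V ∘ₗ R ∘ₗ P k V

set_option linter.unusedSectionVars false

-- induction principle
lemma end_induction (p : (V ⊗[k] V →ₗ[k] V ⊗[k] V) → Prop)
    (h0 : p 0) (hadd : ∀ a b, p a → p b → p (a + b))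
    (hmap : ∀ f g : V →ₗ[k] V, p (TensorProduct.map f g))
    (X : V ⊗[k] V →ₗ[k] V ⊗[k] V) : p X := by
  obtain ⟨y, rfl⟩ := (homTensorHomEquiv k V V V V).surjective X
  induction y using TensorProduct.induction_on with
  | zero => simpa using h0
  | tmul f g => simpa [homTensorHomEquiv_apply] using hmap f g
  | add a b ha hb => simpa using hadd _ _ ha hb

lemma P_comp_P : P k V ∘ₗ P k V = LinearMap.id := by
  apply TensorProduct.ext'
  intro x y
  simp [P]

lemma e12_comp (X Y : V ⊗[k] V →ₗ[k] V ⊗[k] V) :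
    e12 k V (X ∘ₗ Y) = e12 k V X ∘ₗ e12 k V Y := by
  unfold e12
  rw [← TensorProduct.map_comp, LinearMap.id_comp]

lemma e12_id : e12 k V LinearMap.id = LinearMap.id := by
  unfold e12; exact TensorProduct.map_id

lemma e23_comp (X Y : V ⊗[k] V →ₗ[k] V ⊗[k] V) :
    e23 k V (X ∘ₗ Y) = e23 k V X ∘ₗ e23 k V Y := by
  have hm : TensorProduct.map (LinearMap.id : V →ₗ[k] V) (X ∘ₗ Y)
      = TensorProduct.map LinearMap.id X ∘ₗ TensorProduct.map LinearMap.id Y := by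
    rw [← TensorProduct.map_comp, LinearMap.id_comp]
  unfold e23
  apply LinearMap.ext; intro t
  simp [hm]

lemma e23_id : e23 k V LinearMap.id = LinearMap.id := by
  unfold e23
  rw [TensorProduct.map_id]
  ext x y z
  simp

lemma s23_s23 : s23 k V ∘ₗ s23 k V = LinearMap.id := by
  rw [s23, ← e23_comp]
  have : (TensorProduct.comm k V V).toLinearMap ∘ₗ (TensorProduct.comm k V V).toLinearMap
      = LinearMap.id := P_comp_P k V
  rw [this, e23_id]

lemma e13_comp (X Y : V ⊗[k] V →ₗ[k] V ⊗[k] V) :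
    e13 k V (X ∘ₗ Y) = e13 k V X ∘ₗ e13 k V Y := by
  unfold e13
  rw [e12_comp]
  calc s23 k V ∘ₗ (e12 k V X ∘ₗ e12 k V Y) ∘ₗ s23 k V
      = s23 k V ∘ₗ e12 k V X ∘ₗ ((s23 k V ∘ₗ s23 k V) ∘ₗ e12 k V Y) ∘ₗ s23 k V := by
        rw [s23_s23]; simp only [LinearMap.id_comp, LinearMap.comp_assoc]
    _ = (s23 k V ∘ₗ e12 k V X ∘ₗ s23 k V) ∘ₗ s23 k V ∘ₗ e12 k V Y ∘ₗ s23 k V := by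
        simp only [LinearMap.comp_assoc]

-- the key conjugation lemma
lemma s12_e23 (X : V ⊗[k] V →ₗ[k] V ⊗[k] V) :
    e12 k V (P k V) ∘ₗ e23 k V X ∘ₗ e12 k V (P k V) = e13 k V X := by
  induction X using end_induction with
  | h0 => 
      have : e23 k V 0 = 0 := by unfold e23; simp
      have h13 : e13 k V 0 = 0 := by unfold e13 e12; simp
      simp [this, h13]
  | hadd a b ha hb =>
      have h23 : e23 k V (a + b) = e23 k V a + e23 k V b := by
        unfold e23
        simp [TensorProduct.map_add_right, LinearMap.comp_add, LinearMap.add_comp]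
      have h13 : e13 k V (a + b) = e13 k V a + e13 k V b := by
        unfold e13 e12
        simp [TensorProduct.map_add_left, LinearMap.comp_add, LinearMap.add_comp]
      simp [h23, h13, LinearMap.comp_add, LinearMap.add_comp, ha, hb]
  | hmap f g =>
      apply TensorProduct.ext'
      intro xy z
      induction xy using TensorProduct.induction_on with
      | zero => simp
      | tmul x y => simp [e12, e23, e13, s23, P]
      | add a b ha hb => simp only [add_tmul, map_add, ha, hb]

lemma s12_s12 : e12 k V (P k V) ∘ₗ e12 k V (P k V) = LinearMap.id := by
  rw [← e12_comp, P_comp_P, e12_id]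

lemma s12_e13 (X : V ⊗[k] V →ₗ[k] V ⊗[k] V) :
    e12 k V (P k V) ∘ₗ e13 k V X ∘ₗ e12 k V (P k V) = e23 k V X := by
  rw [← s12_e23]
  simp only [← LinearMap.comp_assoc, s12_s12, LinearMap.id_comp]
  simp only [LinearMap.comp_assoc, s12_s12, LinearMap.comp_id]

lemma s12_e12 (X : V ⊗[k] V →ₗ[k] V ⊗[k] V) :
    e12 k V (P k V) ∘ₗ e12 k V X ∘ₗ e12 k V (P k V) = e12 k V (P k V ∘ₗ X ∘ₗ P k V) := by
  rw [e12_comp, e12_comp]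

lemma s23_e12 (X : V ⊗[k] V →ₗ[k] V ⊗[k] V) :
    s23 k V ∘ₗ e12 k V X ∘ₗ s23 k V = e13 k V X := rfl

lemma s23_e13 (X : V ⊗[k] V →ₗ[k] V ⊗[k] V) :
    s23 k V ∘ₗ e13 k V X ∘ₗ s23 k V = e12 k V X := by
  rw [e13]
  simp only [← LinearMap.comp_assoc, s23_s23, LinearMap.id_comp]
  simp only [LinearMap.comp_assoc, s23_s23, LinearMap.comp_id]

lemma s23_e23 (X : V ⊗[k] V →ₗ[k] V ⊗[k] V) :
    s23 k V ∘ₗ e23 k V X ∘ₗ s23 k V = e23 k V (P k V ∘ₗ X ∘ₗ P k V) := by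
  rw [s23, ← e23_comp, ← e23_comp]; rfl

lemma R21_def (R : V ⊗[k] V →ₗ[k] V ⊗[k] V) : R21 k V R = P k V ∘ₗ R ∘ₗ P k V := rfl

lemma conj3L {M : Type*} [AddCommGroup M] [Module k M] (s a b c d e f : M →ₗ[k] M)
    (hs : s ∘ₗ s = LinearMap.id)
    (h : a ∘ₗ b ∘ₗ c = d ∘ₗ e ∘ₗ f) :
    (s ∘ₗ a ∘ₗ s) ∘ₗ (s ∘ₗ b ∘ₗ s) ∘ₗ (s ∘ₗ c ∘ₗ s)
      = (s ∘ₗ d ∘ₗ s) ∘ₗ (s ∘ₗ e ∘ₗ s) ∘ₗ (s ∘ₗ f ∘ₗ s) := by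
  have h2 : ∀ x : M →ₗ[k] M, s ∘ₗ (s ∘ₗ x) = x := fun x => by
    rw [← LinearMap.comp_assoc, hs, LinearMap.id_comp]
  have h3 : ∀ x : M →ₗ[k] M, a ∘ₗ (b ∘ₗ (c ∘ₗ x)) = d ∘ₗ (e ∘ₗ (f ∘ₗ x)) := fun x => by
    simpa only [LinearMap.comp_assoc] using congrArg (fun z => z ∘ₗ x) h
  simp only [LinearMap.comp_assoc, h2]
  rw [h3]


/-- If `R` is an invertible solution of the quantum Yang–Baxter
equation and `Q = R₂₁ ∘ R`, then `Q₂₃ R₂₁ Q₁₃ R₁₂ = R₂₁ Q₁₃ R₁₂ Q₂₃` in `End(V⊗V⊗V)`,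
where `R₂₁` is placed in legs 1,2. -/
theorem Q_reflection_identity (R Rinv : V ⊗[k] V →ₗ[k] V ⊗[k] V)
    (hR : R ∘ₗ Rinv = LinearMap.id) (hR' : Rinv ∘ₗ R = LinearMap.id)
    (hybe : e12 k V R ∘ₗ e13 k V R ∘ₗ e23 k V R
      = e23 k V R ∘ₗ e13 k V R ∘ₗ e12 k V R) :
    e23 k V (R21 k V R ∘ₗ R) ∘ₗ e12 k V (R21 k V R)
        ∘ₗ e13 k V (R21 k V R ∘ₗ R) ∘ₗ e12 k V R
      = e12 k V (R21 k V R) ∘ₗ e13 k V (R21 k V R ∘ₗ R)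
          ∘ₗ e12 k V R ∘ₗ e23 k V (R21 k V R ∘ₗ R) := by
  have hD : e13 k V R ∘ₗ e12 k V R ∘ₗ e23 k V (R21 k V R)
      = e23 k V (R21 k V R) ∘ₗ e12 k V R ∘ₗ e13 k V R := by
    have := conj3L k (s23 k V) _ _ _ _ _ _ (s23_s23 k V) hybe
    rwa [s23_e12, s23_e13, s23_e23, ← R21_def] at this
  have hA : e23 k V R ∘ₗ e12 k V (R21 k V R) ∘ₗ e13 k V (R21 k V R)
      = e13 k V (R21 k V R) ∘ₗ e12 k V (R21 k V R) ∘ₗ e23 k V R := by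
    have := conj3L k (e12 k V (P k V)) _ _ _ _ _ _ (s12_s12 k V) hD
    rwa [s12_e13, s12_e12, s12_e23, ← R21_def] at this
  have hC : e23 k V (R21 k V R) ∘ₗ e13 k V (R21 k V R) ∘ₗ e12 k V (R21 k V R)
      = e12 k V (R21 k V R) ∘ₗ e13 k V (R21 k V R) ∘ₗ e23 k V (R21 k V R) := by
    have := conj3L k (s23 k V) _ _ _ _ _ _ (s23_s23 k V) hA
    rwa [s23_e23, s23_e12, s23_e13, ← R21_def] at this
  have hA' : ∀ x : (V ⊗[k] V) ⊗[k] V →ₗ[k] (V ⊗[k] V) ⊗[k] V,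
      e23 k V R ∘ₗ (e12 k V (R21 k V R) ∘ₗ (e13 k V (R21 k V R) ∘ₗ x))
        = e13 k V (R21 k V R) ∘ₗ (e12 k V (R21 k V R) ∘ₗ (e23 k V R ∘ₗ x)) := fun x => by
    simpa only [LinearMap.comp_assoc] using congrArg (fun z => z ∘ₗ x) hA
  have hC' : ∀ x : (V ⊗[k] V) ⊗[k] V →ₗ[k] (V ⊗[k] V) ⊗[k] V,
      e23 k V (R21 k V R) ∘ₗ (e13 k V (R21 k V R) ∘ₗ (e12 k V (R21 k V R) ∘ₗ x))
        = e12 k V (R21 k V R) ∘ₗ (e13 k V (R21 k V R) ∘ₗ (e23 k V (R21 k V R) ∘ₗ x)) := fun x => by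
    simpa only [LinearMap.comp_assoc] using congrArg (fun z => z ∘ₗ x) hC
  have hD' : ∀ x : (V ⊗[k] V) ⊗[k] V →ₗ[k] (V ⊗[k] V) ⊗[k] V,
      e23 k V (R21 k V R) ∘ₗ (e12 k V R ∘ₗ (e13 k V R ∘ₗ x))
        = e13 k V R ∘ₗ (e12 k V R ∘ₗ (e23 k V (R21 k V R) ∘ₗ x)) := fun x => by
    simpa only [LinearMap.comp_assoc] using congrArg (fun z => z ∘ₗ x) hD.symm
  rw [e23_comp, e13_comp]
  simp only [LinearMap.comp_assoc]
  rw [hA', ← hybe, hC', hD']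


end Stmt13
end
end

section
/- Let A be an associative unital algebra, V = kⁿ, K ∈ End(V)⊗A satisfying the reflection equation R₂₁K₁R₁₂K₂ = K₂R₂₁K₁R₁₂ with R ∈ End(V⊗V) invertible with scalar entries. Suppose μ ∈ End(V) is an invertible scalar matrix such that for every X ∈ End(V)⊗A the partial trace identities Tr₁(μ₁ R₁₂⁻¹ X₁ R₁₂) = Tr(μX)·1 and Tr₁(μ₁ R₂₁ X₁ R₂₁⁻¹) = Tr(μX)·1 hold in End(V)⊗A. Then for every natural number m, the quantum trace Tr(μ·K^m) ∈ A commutes with every entry K^i_j of the matrix K, i.e. Tr(μK^m) is central in the subalgebra of A generated by the entries of K. -/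
set_option maxHeartbeats 1000000


open Matrix

noncomputable section

namespace Stmt15

variable (k A : Type*) [Field k] [Ring A] [Algebra k A] (n : ℕ)

/-- The flip (permutation) matrix `P` on `V ⊗ V` for `V = kⁿ`. -/
def P : Matrix (Fin n × Fin n) (Fin n × Fin n) k :=
  fun p q => if p.1 = q.2 ∧ p.2 = q.1 then 1 else 0

/-- `K₁ = K ⊗ 1`, `K` placed in the first leg of `End(V⊗V) ⊗ A`. -/
def lift1 (K : Matrix (Fin n) (Fin n) A) : Matrix (Fin n × Fin n) (Fin n × Fin n) A :=
  Matrix.kroneckerMap (· * ·) K (1 : Matrix (Fin n) (Fin n) A)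

/-- `K₂ = 1 ⊗ K`, `K` placed in the second leg of `End(V⊗V) ⊗ A`. -/
def lift2 (K : Matrix (Fin n) (Fin n) A) : Matrix (Fin n × Fin n) (Fin n × Fin n) A :=
  Matrix.kroneckerMap (· * ·) (1 : Matrix (Fin n) (Fin n) A) K

/-- A scalar matrix viewed as a matrix over `A` (entries commute with all of `A`). -/
def mk (R : Matrix (Fin n × Fin n) (Fin n × Fin n) k) :
    Matrix (Fin n × Fin n) (Fin n × Fin n) A :=
  R.map (algebraMap k A)


/-- Partial trace over the first `End(V)` factor of `End(V⊗V) ⊗ A`. -/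
def ptr1 (M : Matrix (Fin n × Fin n) (Fin n × Fin n) A) : Matrix (Fin n) (Fin n) A :=
  fun i j => ∑ l : Fin n, M (l, i) (l, j)

variable {k A n}

lemma mk_mul (X Y : Matrix (Fin n × Fin n) (Fin n × Fin n) k) :
    mk k A n (X * Y) = mk k A n X * mk k A n Y := Matrix.map_mul

lemma mk_one : mk k A n 1 = 1 := Matrix.map_one _ (map_zero _) (RingHom.map_one _)

lemma mkP_mul (M : Matrix (Fin n × Fin n) (Fin n × Fin n) A) (p q : Fin n × Fin n) :
    (mk k A n (P k n) * M) p q = M (p.2, p.1) q := by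
  simp only [Matrix.mul_apply, mk, P, Matrix.map_apply, apply_ite, RingHom.map_one, RingHom.map_zero, ite_mul,
    one_mul, zero_mul]
  rw [Fintype.sum_prod_type]
  simp [ite_and, Finset.sum_ite_eq', Finset.sum_ite_eq, @eq_comm _ p.1, @eq_comm _ p.2]

lemma mul_mkP (M : Matrix (Fin n × Fin n) (Fin n × Fin n) A) (p q : Fin n × Fin n) :
    (M * mk k A n (P k n)) p q = M p (q.2, q.1) := by
  simp only [Matrix.mul_apply, mk, P, Matrix.map_apply, apply_ite, RingHom.map_one, RingHom.map_zero, mul_ite,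
    mul_one, mul_zero]
  rw [Fintype.sum_prod_type, Finset.sum_comm]
  simp [ite_and, Finset.sum_ite_eq', Finset.sum_ite_eq]

lemma mkP_mkP : mk k A n (P k n) * mk k A n (P k n) = 1 := by
  ext p q
  rw [mkP_mul]
  simp [mk, P, Matrix.one_apply, Prod.ext_iff, and_comm, eq_comm]

lemma mkP_lift1_mkP (K : Matrix (Fin n) (Fin n) A) :
    mk k A n (P k n) * lift1 A n K * mk k A n (P k n) = lift2 A n K := by
  ext p q
  rw [Matrix.mul_assoc, mkP_mul, mul_mkP]
  simp only [lift1, lift2, kroneckerMap_apply, Matrix.one_apply]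
  split <;> simp


lemma lift1_mul (X Y : Matrix (Fin n) (Fin n) A) :
    lift1 A n (X * Y) = lift1 A n X * lift1 A n Y := by
  ext p q
  simp only [lift1, kroneckerMap_apply, Matrix.mul_apply]
  rw [Fintype.sum_prod_type, Finset.sum_comm]
  simp [Matrix.one_apply, ite_and, Finset.sum_ite_eq', Finset.sum_ite_eq, mul_ite, ite_mul,
    Finset.mul_sum, Finset.sum_mul]

lemma lift1_pow (X : Matrix (Fin n) (Fin n) A) (m : ℕ) :
    lift1 A n (X ^ m) = lift1 A n X ^ m := by
  induction m with
  | zero =>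
    ext p q
    simp [lift1, pow_zero, Matrix.one_apply, Prod.ext_iff, ite_and]
    split <;> split <;> simp_all
  | succ m ih => rw [pow_succ, lift1_mul, ih, pow_succ]

lemma lift1_lift2_comm (X Y : Matrix (Fin n) (Fin n) A)
    (h : ∀ a b c d, X a b * Y c d = Y c d * X a b) :
    lift1 A n X * lift2 A n Y = lift2 A n Y * lift1 A n X := by
  ext p q
  simp only [Matrix.mul_apply, lift1, lift2, kroneckerMap_apply]
  rw [Fintype.sum_prod_type, Finset.sum_comm, Fintype.sum_prod_type]
  simp [Matrix.one_apply, ite_and, mul_ite, ite_mul, mul_one, one_mul, mul_zero, zero_mul,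
    Finset.sum_ite_eq', Finset.sum_ite_eq, h]

lemma ptr1_mul_lift2 (M : Matrix (Fin n × Fin n) (Fin n × Fin n) A)
    (X : Matrix (Fin n) (Fin n) A) :
    ptr1 A n (M * lift2 A n X) = ptr1 A n M * X := by
  ext i j
  simp only [ptr1, Matrix.mul_apply, lift2, kroneckerMap_apply]
  rw [Finset.sum_comm]
  simp only [Fintype.sum_prod_type]
  rw [Finset.sum_comm]
  simp [Matrix.one_apply, ite_mul, mul_ite, Finset.sum_ite_eq', Finset.sum_ite_eq,
    Finset.sum_mul, Finset.mul_sum]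

lemma ptr1_lift2_mul (M : Matrix (Fin n × Fin n) (Fin n × Fin n) A)
    (X : Matrix (Fin n) (Fin n) A) :
    ptr1 A n (lift2 A n X * M) = X * ptr1 A n M := by
  ext i j
  simp only [ptr1, Matrix.mul_apply, lift2, kroneckerMap_apply]
  rw [Finset.sum_comm]
  simp only [Fintype.sum_prod_type]
  simp [Matrix.one_apply, ite_mul, mul_ite, Finset.sum_ite_eq', Finset.sum_ite_eq,
    Finset.sum_mul, Finset.mul_sum]
  rw [Finset.sum_comm]

lemma mkP_lift2_mkP (K : Matrix (Fin n) (Fin n) A) :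
    mk k A n (P k n) * lift2 A n K * mk k A n (P k n) = lift1 A n K := by
  rw [← mkP_lift1_mkP (k := k) (A := A) (n := n) K]
  calc mk k A n (P k n) * (mk k A n (P k n) * lift1 A n K * mk k A n (P k n)) * mk k A n (P k n)
      = (mk k A n (P k n) * mk k A n (P k n)) * lift1 A n K
        * (mk k A n (P k n) * mk k A n (P k n)) := by noncomm_ring
    _ = lift1 A n K := by rw [mkP_mkP, Matrix.one_mul, Matrix.mul_one]

lemma conj_pow (Q Qi X : Matrix (Fin n × Fin n) (Fin n × Fin n) A) (h : Qi * Q = 1) (h2 : Q * Qi = 1) (m : ℕ) :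
    (Q * X * Qi) ^ m = Q * X ^ m * Qi := by
  induction m with
  | zero => rw [pow_zero, pow_zero, Matrix.mul_one, h2]
  | succ m ih =>
    rw [pow_succ, ih, pow_succ]
    calc Q * X ^ m * Qi * (Q * X * Qi) = Q * X ^ m * (Qi * Q) * X * Qi := by
          noncomm_ring
      _ = Q * (X ^ m * X) * Qi := by rw [h]; noncomm_ring

lemma exchange_pow {M : Type*} [Ring M] (Q Qi S Si K1 K2 : M)
    (hSiS : Si * S = 1) (hQQi : Q * Qi = 1)
    (hflip : K1 * S * K2 * Q = S * K2 * Q * K1) (m : ℕ) :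
    K2 * (Q * K1 * Qi) ^ m = (Si * K1 * S) ^ m * K2 := by
  have hkey : K2 * (Q * K1 * Qi) = (Si * K1 * S) * K2 := by
    have h1 : K1 * S * K2 = S * K2 * Q * K1 * Qi := by
      calc K1 * S * K2 = K1 * S * K2 * (Q * Qi) := by rw [hQQi, mul_one]
        _ = (K1 * S * K2 * Q) * Qi := by noncomm_ring
        _ = S * K2 * Q * K1 * Qi := by rw [hflip]
    calc K2 * (Q * K1 * Qi) = (Si * S) * K2 * (Q * K1 * Qi) := by rw [hSiS, one_mul]
      _ = Si * (S * K2 * Q * K1 * Qi) := by noncomm_ring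
      _ = Si * (K1 * S * K2) := by rw [h1]
      _ = (Si * K1 * S) * K2 := by noncomm_ring
  generalize hX : Q * K1 * Qi = X at hkey ⊢
  generalize hY : Si * K1 * S = Y at hkey ⊢
  induction m with
  | zero => rw [pow_zero, pow_zero, mul_one, one_mul]
  | succ m ih =>
    rw [pow_succ, ← mul_assoc, ih, mul_assoc, hkey, ← mul_assoc, ← pow_succ]

lemma flip_of_RE {M : Type*} [Ring M] (Pm S Q K1 K2 : M)
    (hPP : Pm * Pm = 1) (hQ : Q = Pm * S * Pm)
    (c1 : Pm * K1 * Pm = K2) (c2 : Pm * K2 * Pm = K1)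
    (hRE : Q * K1 * S * K2 = K2 * Q * K1 * S) :
    K1 * S * K2 * Q = S * K2 * Q * K1 := by
  have hQP : Pm * Q * Pm = S := by
    rw [hQ]
    calc Pm * (Pm * S * Pm) * Pm = (Pm * Pm) * S * (Pm * Pm) := by noncomm_ring
      _ = S := by rw [hPP, one_mul, mul_one]
  have hSP : Pm * S * Pm = Q := hQ.symm
  calc K1 * S * K2 * Q
      = (Pm*K2*Pm) * (Pm*Q*Pm) * (Pm*K1*Pm) * (Pm*S*Pm) := by rw [c1, c2, hQP, hSP]
    _ = Pm * (K2 * (Pm*Pm) * Q * (Pm*Pm) * K1 * (Pm*Pm) * S) * Pm := by noncomm_ring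
    _ = Pm * (K2 * Q * K1 * S) * Pm := by rw [hPP]; noncomm_ring
    _ = Pm * (Q * K1 * S * K2) * Pm := by rw [← hRE]
    _ = (Pm*Q*Pm) * (Pm*K1*Pm) * (Pm*S*Pm) * (Pm*K2*Pm) := by
        have e : (Pm*Q*Pm) * (Pm*K1*Pm) * (Pm*S*Pm) * (Pm*K2*Pm)
            = Pm * (Q * ((Pm*Pm) * (K1 * ((Pm*Pm) * (S * ((Pm*Pm) * K2)))))) * Pm := by
          noncomm_ring
        rw [e, hPP, one_mul, one_mul, one_mul]
        noncomm_ring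
    _ = S * K2 * Q * K1 := by rw [c1, c2, hQP, hSP]

variable (k A n)

/-- Suppose `K` satisfies the reflection equation and `μ` is an
invertible scalar matrix satisfying the partial trace identities
`Tr₁(μ₁R₁₂⁻¹X₁R₁₂) = Tr(μX)·1` and `Tr₁(μ₁R₂₁X₁R₂₁⁻¹) = Tr(μX)·1` for all `X`. Then for
every `m`, the quantum trace `Tr(μK^m)` commutes with every entry of `K`. -/
theorem quantum_trace_central
    (R Rinv : Matrix (Fin n × Fin n) (Fin n × Fin n) k)
    (hR : R * Rinv = 1) (hR' : Rinv * R = 1)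
    (K : Matrix (Fin n) (Fin n) A)
    (hRE : mk k A n (P k n * R * P k n) * lift1 A n K * mk k A n R * lift2 A n K
      = lift2 A n K * mk k A n (P k n * R * P k n) * lift1 A n K * mk k A n R)
    (μ : Matrix (Fin n) (Fin n) k) (hμ : IsUnit μ)
    (htr1 : ∀ X : Matrix (Fin n) (Fin n) A,
      ptr1 A n (lift1 A n (μ.map (algebraMap k A)) * mk k A n Rinv * lift1 A n X
          * mk k A n R)
        = Matrix.trace (μ.map (algebraMap k A) * X) • (1 : Matrix (Fin n) (Fin n) A))
    (htr2 : ∀ X : Matrix (Fin n) (Fin n) A,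
      ptr1 A n (lift1 A n (μ.map (algebraMap k A)) * mk k A n (P k n * R * P k n)
          * lift1 A n X * mk k A n (P k n * Rinv * P k n))
        = Matrix.trace (μ.map (algebraMap k A) * X) • (1 : Matrix (Fin n) (Fin n) A)) :
    ∀ m : ℕ, ∀ i j : Fin n,
      Matrix.trace (μ.map (algebraMap k A) * K ^ m) * K i j
        = K i j * Matrix.trace (μ.map (algebraMap k A) * K ^ m) := by
  intro m i j
  have htr2' := htr2 (K ^ m)
  have htr1' := htr1 (K ^ m)
  clear htr1 htr2
  set Pm := mk k A n (P k n) with hPm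
  set S := mk k A n R with hS
  set Si := mk k A n Rinv with hSi
  set K1 := lift1 A n K with hK1
  set K2 := lift2 A n K with hK2
  set μ1 := lift1 A n (μ.map (algebraMap k A)) with hμ1
  set t := Matrix.trace (μ.map (algebraMap k A) * K ^ m) with ht
  set Km := lift1 A n (K ^ m) with hKm
  -- basic facts before abstraction
  have hSSi : S * Si = 1 := by rw [hS, hSi, ← mk_mul, hR, mk_one]
  have hSiS : Si * S = 1 := by rw [hS, hSi, ← mk_mul, hR', mk_one]
  have hQdef : mk k A n (P k n * R * P k n) = Pm * S * Pm := by rw [mk_mul, mk_mul]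
  have hQidef : mk k A n (P k n * Rinv * P k n) = Pm * Si * Pm := by rw [mk_mul, mk_mul]
  have hPP : Pm * Pm = 1 := mkP_mkP
  have c1 : Pm * K1 * Pm = K2 := mkP_lift1_mkP K
  have c2 : Pm * K2 * Pm = K1 := mkP_lift2_mkP K
  have hKmpow : Km = K1 ^ m := lift1_pow K m
  have hμK : μ1 * K2 = K2 * μ1 := by
    apply lift1_lift2_comm
    intro a b c d
    simp only [Matrix.map_apply]
    exact (Algebra.commutes (μ a b) (K c d))
  have hptrR : ∀ M, ptr1 A n (M * K2) = ptr1 A n M * K := fun M => ptr1_mul_lift2 M K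
  have hptrL : ∀ M, ptr1 A n (K2 * M) = K * ptr1 A n M := fun M => ptr1_lift2_mul M K
  rw [hQdef, hQidef] at htr2'
  rw [hQdef] at hRE
  clear_value Pm S Si K1 K2 μ1 t Km
  clear hPm hS hSi hK1 hK2 hμ1 ht hKm
  -- now pure algebra
  set Q := Pm * S * Pm with hQ
  set Qi := Pm * Si * Pm with hQi
  have hQQi : Q * Qi = 1 := by
    calc Pm * S * Pm * (Pm * Si * Pm) = Pm * (S * ((Pm * Pm) * Si)) * Pm := by noncomm_ring
      _ = 1 := by rw [hPP, one_mul, hSSi, mul_one, hPP]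
  have hQiQ : Qi * Q = 1 := by
    calc Pm * Si * Pm * (Pm * S * Pm) = Pm * (Si * ((Pm * Pm) * S)) * Pm := by noncomm_ring
      _ = 1 := by rw [hPP, one_mul, hSiS, mul_one, hPP]
  have hflip : K1 * S * K2 * Q = S * K2 * Q * K1 := flip_of_RE Pm S Q K1 K2 hPP hQ c1 c2 hRE
  have hpow : K2 * (Q * K1 * Qi) ^ m = (Si * K1 * S) ^ m * K2 :=
    exchange_pow Q Qi S Si K1 K2 hSiS hQQi hflip m
  have hNm : (Q * K1 * Qi) ^ m = Q * Km * Qi := by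
    rw [conj_pow _ _ _ hQiQ hQQi, hKmpow]
  have hN'm : (Si * K1 * S) ^ m = Si * Km * S := by
    rw [conj_pow _ _ _ hSSi hSiS, hKmpow]
  have htrN : ptr1 A n (μ1 * (Q * Km * Qi)) = t • 1 := by
    rw [← htr2']
    exact congrArg (ptr1 A n) (by noncomm_ring)
  have htrN' : ptr1 A n (μ1 * (Si * Km * S)) = t • 1 := by
    rw [← htr1']
    exact congrArg (ptr1 A n) (by noncomm_ring)
  have e1 : K2 * (μ1 * (Q * Km * Qi)) = μ1 * (K2 * (Q * K1 * Qi) ^ m) := by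
    rw [hNm, ← mul_assoc, ← hμK, mul_assoc]
  have e2 : μ1 * (K2 * (Q * K1 * Qi) ^ m) = (μ1 * (Si * Km * S)) * K2 := by
    rw [hpow, hN'm, ← mul_assoc]
  have hmain : K * (t • (1 : Matrix (Fin n) (Fin n) A)) = (t • 1) * K := by
    calc K * (t • (1 : Matrix (Fin n) (Fin n) A))
        = K * ptr1 A n (μ1 * (Q * Km * Qi)) := by rw [htrN]
      _ = ptr1 A n (K2 * (μ1 * (Q * Km * Qi))) := (hptrL _).symm
      _ = ptr1 A n ((μ1 * (Si * Km * S)) * K2) := congrArg (ptr1 A n) (e1.trans e2)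
      _ = ptr1 A n (μ1 * (Si * Km * S)) * K := hptrR _
      _ = (t • 1) * K := by rw [htrN']
  have hentry := congrFun (congrFun hmain i) j
  simp only [Matrix.mul_apply, Matrix.smul_apply, Matrix.one_apply, smul_eq_mul, mul_ite,
    ite_mul, mul_one, one_mul, mul_zero, zero_mul, Finset.sum_ite_eq, Finset.sum_ite_eq',
    Finset.mem_univ, if_true] at hentry
  exact hentry.symm

end Stmt15
end
end
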